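/- arXiv:2410.11546 — 2 statements merged into one kernel-verified Lean document; each statement's English description precedes it below -/
import Mathlib

section
/- Let 𝓗 have two-point distribution P(𝓗=H₁)=p, P(𝓗=H₂)=1−p with 0<H₁<H₂<1, and fix τ>0. Then as t/τ → 0⁺, the second moment of the increment of RL FBMRE satisfies E[(B*_𝓗(t+τ)−B*_𝓗(t))²] → p τ^{2H₁} + (1−p) τ^{2H₂}, which coincides with the (t-independent) second moment of the increment of FBMRE. -/
/-!
The integral `I(x; h) = ∫₀ˣ ((1+u)^{h-1/2} - u^{h-1/2})² du` vanishes as `x → 0⁺` for every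
`h > 0`: the squared kernel is integrable near `0`, its singular part being `u^{2h-1}` with
`2h - 1 > -1`, and a primitive of an integrable function is continuous. Each Hurst component of
the RL moment therefore tends to `2h τ^{2h} · 1/(2h) = τ^{2h}`. The FBMRE moment
`E[exp(2 log τ · 𝓗)] = E[τ^{2𝓗}]` is the average of `τ^{2H}` over the two-point law of `𝓗`.
-/

open MeasureTheory Real Filter Set Topology

noncomputable def rlIncrementKernel (h u : ℝ) : ℝ := (1 + u) ^ (h - 1/2) - u ^ (h - 1/2)

lemma rpow_sub_half_sq {x : ℝ} (hx : 0 ≤ x) (h : ℝ) : (x ^ (h - 1/2)) ^ 2 = x ^ (2 * h - 1) := by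
  rw [← rpow_mul_natCast hx]; ring_nf

lemma memLp_two_rlIncrementKernel {h : ℝ} (hh : 0 < h) :
    MemLp (rlIncrementKernel h) 2 (volume.restrict (Ioc 0 1)) := by
  have hshift : MemLp (fun u : ℝ => (1 + u) ^ (h - 1/2)) 2 (volume.restrict (Ioc 0 1)) := by
    refine (memLp_two_iff_integrable_sq (by fun_prop : Measurable _).aestronglyMeasurable).2 ?_
    refine (ContinuousOn.integrableOn_Icc ?_).mono_set Ioc_subset_Icc_self
    exact ContinuousOn.pow (ContinuousOn.rpow_const (by fun_prop)
      fun u hu => Or.inl (by linarith [hu.1])) 2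
  have hpow : MemLp (fun u : ℝ => u ^ (h - 1/2)) 2 (volume.restrict (Ioc 0 1)) := by
    refine (memLp_two_iff_integrable_sq (by fun_prop : Measurable _).aestronglyMeasurable).2 ?_
    refine (intervalIntegral.intervalIntegrable_rpow' (r := 2 * h - 1) (by linarith)).1.congr_fun
      (fun u hu => (rpow_sub_half_sq hu.1.le h).symm) measurableSet_Ioc
  exact hshift.sub hpow

lemma tendsto_integral_rlIncrementKernel_sq {h : ℝ} (hh : 0 < h) :
    Tendsto (fun x => ∫ u in (0 : ℝ)..x, rlIncrementKernel h u ^ 2) (𝓝[>] 0) (𝓝 0) := by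
  have hint : IntervalIntegrable (fun u => rlIncrementKernel h u ^ 2) volume 0 1 :=
    (intervalIntegrable_iff_integrableOn_Ioc_of_le zero_le_one).2
      (memLp_two_rlIncrementKernel hh).integrable_sq
  have hcont := intervalIntegral.continuousOn_primitive_interval' hint left_mem_uIcc 0
    left_mem_uIcc
  simpa using (hcont.mono_of_mem_nhdsWithin (by simpa using Icc_mem_nhdsGT zero_lt_one)).tendsto

noncomputable def rlIncrementSecondMoment (h τ x : ℝ) : ℝ :=
  2 * h * τ ^ (2 * h) * ((∫ u in (0 : ℝ)..x, rlIncrementKernel h u ^ 2) + 1 / (2 * h))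

lemma tendsto_rlIncrementSecondMoment {h : ℝ} (hh : 0 < h) (τ : ℝ) :
    Tendsto (rlIncrementSecondMoment h τ) (𝓝[>] 0) (𝓝 (τ ^ (2 * h))) := by
  have hlim := ((tendsto_integral_rlIncrementKernel_sq hh).add_const (1 / (2 * h))).const_mul
    (2 * h * τ ^ (2 * h))
  rwa [zero_add, mul_one_div, mul_div_cancel_left₀ _ (by positivity)] at hlim

lemma integral_comp_eq_of_two_point {Ω α E : Type*} [MeasurableSpace Ω] [MeasurableSpace α]
    [MeasurableSingletonClass α] [NormedAddCommGroup E] [NormedSpace ℝ E] [CompleteSpace E]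
    {μ : Measure Ω} [IsProbabilityMeasure μ] {X : Ω → α} (hX : Measurable X) {a b : α}
    (hab : a ≠ b) {p : ℝ} (hp : p ∈ Icc 0 1) (ha : μ (X ⁻¹' {a}) = ENNReal.ofReal p)
    (hb : μ (X ⁻¹' {b}) = ENNReal.ofReal (1 - p)) (f : α → E) :
    ∫ ω, f (X ω) ∂μ = p • f a + (1 - p) • f b := by
  have hmeas (c : α) : MeasurableSet (X ⁻¹' {c}) := hX (measurableSet_singleton c)
  have hdisj : Disjoint (X ⁻¹' {a}) (X ⁻¹' {b}) := (disjoint_singleton.2 hab).preimage X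
  have hfull : ∀ᵐ ω ∂μ, ω ∈ X ⁻¹' {a} ∪ X ⁻¹' {b} := by
    refine mem_ae_iff.2 ((prob_compl_eq_zero_iff ((hmeas a).union (hmeas b))).2 ?_)
    rw [measure_union hdisj (hmeas b), ha, hb, ← ENNReal.ofReal_add hp.1 (sub_nonneg.2 hp.2),
      add_sub_cancel, ENNReal.ofReal_one]
  have hconst (c : α) : EqOn (fun ω => f (X ω)) (fun _ => f c) (X ⁻¹' {c}) :=
    fun ω hω => congrArg f hω
  have hint (c : α) : IntegrableOn (fun ω => f (X ω)) (X ⁻¹' {c}) μ :=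
    (integrableOn_const (measure_ne_top _ _)).congr_fun (hconst c).symm (hmeas c)
  calc ∫ ω, f (X ω) ∂μ = ∫ ω in X ⁻¹' {a} ∪ X ⁻¹' {b}, f (X ω) ∂μ := by
        rw [Measure.restrict_eq_self_of_ae_mem hfull]
    _ = (∫ ω in X ⁻¹' {a}, f a ∂μ) + ∫ ω in X ⁻¹' {b}, f b ∂μ := by
        rw [setIntegral_union hdisj (hmeas b) (hint a) (hint b),
          setIntegral_congr_fun (hmeas a) (hconst a), setIntegral_congr_fun (hmeas b) (hconst b)]
    _ = p • f a + (1 - p) • f b := by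
        rw [setIntegral_const, setIntegral_const, measureReal_def, measureReal_def, ha, hb,
          ENNReal.toReal_ofReal hp.1, ENNReal.toReal_ofReal (sub_nonneg.2 hp.2)]

theorem rlfbmre_two_point_increment_short_time_general
    {Ω : Type*} [MeasurableSpace Ω] (μ : Measure Ω) [IsProbabilityMeasure μ]
    (p H₁ H₂ τ : ℝ) (hp : p ∈ Set.Ioo (0 : ℝ) 1)
    (h1 : 0 < H₁) (h12 : H₁ < H₂) (hτ : 0 < τ)
    (𝓗 : Ω → ℝ) (h𝓗 : Measurable 𝓗)
    (hd1 : μ (𝓗 ⁻¹' {H₁}) = ENNReal.ofReal p)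
    (hd2 : μ (𝓗 ⁻¹' {H₂}) = ENNReal.ofReal (1 - p))
    (X : ℝ → Ω → ℝ)
    (hmom : ∀ t : ℝ, 0 ≤ t →
      ∫ ω, (X (t + τ) ω - X t ω) ^ 2 ∂μ
        = p * (2 * H₁ * τ ^ (2 * H₁)
            * ((∫ u in (0 : ℝ)..(t / τ), ((1 + u) ^ (H₁ - 1/2) - u ^ (H₁ - 1/2)) ^ 2)
                + 1 / (2 * H₁)))
          + (1 - p) * (2 * H₂ * τ ^ (2 * H₂)
            * ((∫ u in (0 : ℝ)..(t / τ), ((1 + u) ^ (H₂ - 1/2) - u ^ (H₂ - 1/2)) ^ 2)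
                + 1 / (2 * H₂))))
    (Y : ℝ → Ω → ℝ)
    (hY : ∀ t : ℝ, 0 ≤ t →
      ∫ ω, (Y (t + τ) ω - Y t ω) ^ 2 ∂μ
        = ∫ ω, Real.exp ((2 * Real.log τ) * 𝓗 ω) ∂μ) :
    Tendsto (fun t : ℝ => ∫ ω, (X (t + τ) ω - X t ω) ^ 2 ∂μ)
      (nhdsWithin 0 (Set.Ioi 0)) (nhds (p * τ ^ (2 * H₁) + (1 - p) * τ ^ (2 * H₂))) ∧
    (∀ t : ℝ, 0 ≤ t →
      ∫ ω, (Y (t + τ) ω - Y t ω) ^ 2 ∂μ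
        = p * τ ^ (2 * H₁) + (1 - p) * τ ^ (2 * H₂)) := by
  refine ⟨?_, fun t ht => ?_⟩
  · have hscale : Tendsto (· / τ) (𝓝[>] 0) (𝓝[>] 0) :=
      tendsto_nhdsWithin_of_tendsto_nhds_of_eventually_within _
        ((tendsto_id.div_const τ).mono_left nhdsWithin_le_nhds |>.trans_eq (by simp))
        (eventually_nhdsWithin_of_forall fun t ht => div_pos ht hτ)
    have hlim := (((tendsto_rlIncrementSecondMoment h1 τ).comp hscale).const_mul p).add
      (((tendsto_rlIncrementSecondMoment (h1.trans h12) τ).comp hscale).const_mul (1 - p))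
    refine hlim.congr' ?_
    filter_upwards [self_mem_nhdsWithin] with t ht using (hmom t ht.le).symm
  · rw [hY t ht, integral_comp_eq_of_two_point h𝓗 h12.ne (Ioo_subset_Icc_self hp) hd1 hd2
      (fun H => exp (2 * log τ * H)), rpow_def_of_pos hτ, rpow_def_of_pos hτ]
    simp only [smul_eq_mul, mul_assoc, mul_left_comm (2 : ℝ)]

/-- For RL FBMRE with two-point distributed Hurst exponent (encoded via the
explicit formula for the second moment of the increment), for fixed `τ > 0`, as `t/τ → 0⁺`
(i.e. `t → 0⁺`) the second moment of the increment converges to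
`p τ^{2H₁} + (1−p) τ^{2H₂}`, which coincides with the (t-independent) second moment of the
increment of FBMRE `Y` (whose increment second moment is `M_𝓗(2 log τ)`). -/
theorem rlfbmre_two_point_increment_short_time
    {Ω : Type*} [MeasurableSpace Ω] (μ : Measure Ω) [IsProbabilityMeasure μ]
    (p H₁ H₂ τ : ℝ) (hp : p ∈ Set.Ioo (0 : ℝ) 1)
    (h1 : 0 < H₁) (h12 : H₁ < H₂) (h2 : H₂ < 1) (hτ : 0 < τ)
    (𝓗 : Ω → ℝ) (h𝓗 : Measurable 𝓗)
    (hd1 : μ (𝓗 ⁻¹' {H₁}) = ENNReal.ofReal p)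
    (hd2 : μ (𝓗 ⁻¹' {H₂}) = ENNReal.ofReal (1 - p))
    (X : ℝ → Ω → ℝ)
    (hmom : ∀ t : ℝ, 0 ≤ t →
      ∫ ω, (X (t + τ) ω - X t ω) ^ 2 ∂μ
        = p * (2 * H₁ * τ ^ (2 * H₁)
            * ((∫ u in (0 : ℝ)..(t / τ), ((1 + u) ^ (H₁ - 1/2) - u ^ (H₁ - 1/2)) ^ 2)
                + 1 / (2 * H₁)))
          + (1 - p) * (2 * H₂ * τ ^ (2 * H₂)
            * ((∫ u in (0 : ℝ)..(t / τ), ((1 + u) ^ (H₂ - 1/2) - u ^ (H₂ - 1/2)) ^ 2)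
                + 1 / (2 * H₂))))
    (Y : ℝ → Ω → ℝ)
    (hY : ∀ t : ℝ, 0 ≤ t →
      ∫ ω, (Y (t + τ) ω - Y t ω) ^ 2 ∂μ
        = ∫ ω, Real.exp ((2 * Real.log τ) * 𝓗 ω) ∂μ) :
    Tendsto (fun t : ℝ => ∫ ω, (X (t + τ) ω - X t ω) ^ 2 ∂μ)
      (nhdsWithin 0 (Set.Ioi 0)) (nhds (p * τ ^ (2 * H₁) + (1 - p) * τ ^ (2 * H₂))) ∧
    (∀ t : ℝ, 0 ≤ t →
      ∫ ω, (Y (t + τ) ω - Y t ω) ^ 2 ∂μ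
        = p * τ ^ (2 * H₁) + (1 - p) * τ ^ (2 * H₂)) :=
  rlfbmre_two_point_increment_short_time_general μ p H₁ H₂ τ hp h1 h12 hτ 𝓗 h𝓗 hd1 hd2 X hmom Y hY
end

section
/- For H ∈ (0,1), the expected TAMSD of RL FBM over a window of length T with lag τ ∈ (0,T) decomposes as E[δ*_H(τ)] = (1/(2H+1)) (T^{2H+1} − τ^{2H+1})/(T−τ) + (1/(2H+1)) (T−τ)^{2H} − (4H/(H+1/2)) (1/(T−τ)) ∫₀^{T−τ} t^{H+1/2} (t+τ)^{H−1/2} · ₂F₁(1/2−H, 1; 3/2+H; t/(t+τ)) dt. -/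
open MeasureTheory Real

/-- The Gauss hypergeometric function `₂F₁(a, b; c; z)`, as a power series
`Σₙ (a)ₙ(b)ₙ/((c)ₙ n!) zⁿ` with Pochhammer symbols `(a)ₙ = ∏_{i<n} (a+i)`. -/
noncomputable def twoF1 (a b c z : ℝ) : ℝ :=
  ∑' n : ℕ, ((∏ i ∈ Finset.range n, (a + i)) * (∏ i ∈ Finset.range n, (b + i))
    / ((∏ i ∈ Finset.range n, (c + i)) * (Nat.factorial n))) * z ^ n
/-
Expanding the square, `E[(B(t+τ) - B(t))²] = (t+τ)^{2H} + t^{2H} - 2 E[B(t) B(t+τ)]`, and Fubini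
exchanges the expectation with the time average. The two power terms integrate in closed form over
`(0, T-τ]`, and twice the covariance is the hypergeometric term; the latter is integrable in `t`
because it is, almost everywhere, a combination of the integrable mean squared increment and the
two powers.
-/

open Set

theorem integral_sub_sq_eq {Ω : Type*} [MeasurableSpace Ω] {μ : Measure Ω} {X Y : Ω → ℝ}
    (hX : Integrable (fun ω => X ω ^ 2) μ)
    (hY : Integrable (fun ω => Y ω ^ 2) μ) (hXY : Integrable (fun ω => (Y ω - X ω) ^ 2) μ) :
    ∫ ω, (Y ω - X ω) ^ 2 ∂μ = ∫ ω, Y ω ^ 2 ∂μ + ∫ ω, X ω ^ 2 ∂μ - 2 * ∫ ω, X ω * Y ω ∂μ := by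
  have hprod : Integrable (fun ω => X ω * Y ω) μ := by
    have h := ((hX.add hY).sub hXY).div_const 2
    refine h.congr (Filter.Eventually.of_forall fun ω => ?_)
    simp only [Pi.add_apply, Pi.sub_apply]
    ring
  calc ∫ ω, (Y ω - X ω) ^ 2 ∂μ = ∫ ω, (Y ω ^ 2 + X ω ^ 2 - 2 * (X ω * Y ω)) ∂μ := by
        congr 1; ext ω; ring
    _ = _ := by
        rw [integral_sub (hY.fun_add hX) (hprod.const_mul 2), integral_add hY hX,
          integral_const_mul]

theorem integral_intervalIntegral_swap {Ω : Type*} [MeasurableSpace Ω] {μ : Measure Ω}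
    [SFinite μ] {F : ℝ → Ω → ℝ} {a b : ℝ} (hab : a ≤ b)
    (hF : Integrable (Function.uncurry F) ((volume.restrict (Ioc a b)).prod μ)) :
    ∫ ω, (∫ t in a..b, F t ω) ∂μ = ∫ t in a..b, ∫ ω, F t ω ∂μ := by
  simp only [intervalIntegral.integral_of_le hab]
  exact (integral_integral_swap hF).symm

theorem integral_sq_increment_of_rlfbm_moments {Ω : Type*} [MeasurableSpace Ω] {μ : Measure Ω}
    {H τ t : ℝ} (hτ : 0 < τ) (ht : 0 < t) {B : ℝ → Ω → ℝ}
    (hvar : ∀ t : ℝ, 0 ≤ t → ∫ ω, (B t ω) ^ 2 ∂μ = t ^ (2 * H))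
    (hcov : ∀ t : ℝ, 0 ≤ t →
      ∫ ω, B t ω * B (t + τ) ω ∂μ
        = (2 * H / (H + 1/2)) * (t + τ) ^ (H - 1/2) * t ^ (H + 1/2)
            * twoF1 (1/2 - H) 1 (3/2 + H) (t / (t + τ)))
    (hinc : Integrable (fun ω => (B (t + τ) ω - B t ω) ^ 2) μ) :
    ∫ ω, (B (t + τ) ω - B t ω) ^ 2 ∂μ
      = (t + τ) ^ (2 * H) + t ^ (2 * H) - (4 * H / (H + 1/2))
          * (t ^ (H + 1/2) * (t + τ) ^ (H - 1/2) * twoF1 (1/2 - H) 1 (3/2 + H) (t / (t + τ))) := by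
  have hstτ : 0 < t + τ := by linarith
  -- a non-integrable square would have Bochner integral `0`, not the positive `s ^ (2 * H)`
  have hsq : ∀ s, 0 < s → Integrable (fun ω => B s ω ^ 2) μ := fun s hs =>
    .of_integral_ne_zero <| by rw [hvar s hs.le]; exact (rpow_pos_of_pos hs _).ne'
  rw [integral_sub_sq_eq (hsq t ht) (hsq _ hstτ) hinc, hvar t ht.le, hvar _ hstτ.le,
    hcov t ht.le]
  ring

theorem intervalIntegrable_rpow_add_const {r : ℝ} (hr : -1 < r) (c a b : ℝ) :
    IntervalIntegrable (fun t : ℝ => (t + c) ^ r) volume a b := by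
  simpa using
    (intervalIntegral.intervalIntegrable_rpow' hr (a := a + c) (b := b + c)).comp_add_right c

theorem integral_rpow_add_const {r : ℝ} (hr : -1 < r) (c a b : ℝ) :
    ∫ t in a..b, (t + c) ^ r = ((b + c) ^ (r + 1) - (a + c) ^ (r + 1)) / (r + 1) := by
  rw [intervalIntegral.integral_comp_add_right (fun s => s ^ r), integral_rpow (.inl hr)]

theorem intervalIntegral.integral_eq_sub_const_mul_of_ae_eq {f g k : ℝ → ℝ} {a b c : ℝ}
    (hab : a ≤ b) (hc : c ≠ 0) (hf : IntervalIntegrable f volume a b)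
    (hg : IntervalIntegrable g volume a b)
    (hfg : f =ᵐ[volume.restrict (Ioc a b)] fun t => g t - c * k t) :
    ∫ t in a..b, f t = (∫ t in a..b, g t) - c * ∫ t in a..b, k t := by
  have hk : IntervalIntegrable k volume a b := by
    refine (intervalIntegrable_iff_integrableOn_Ioc_of_le hab).2
      (((hg.sub hf).1.div_const c).congr ?_)
    filter_upwards [hfg] with t ht
    rw [ht, sub_sub_cancel, mul_div_cancel_left₀ _ hc]
  rw [← integral_const_mul, ← integral_sub hg (hk.const_mul c), integral_of_le hab,
    integral_of_le hab]
  exact MeasureTheory.integral_congr_ae hfg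

/-- For RL FBM (encoded via `E[(B*_H(t))²] = t^{2H}` and the hypergeometric
covariance formula), the expected TAMSD over a window of length `T` with lag `τ ∈ (0,T)`
decomposes as
`E[δ*_H(τ)] = (1/(2H+1))(T^{2H+1} − τ^{2H+1})/(T−τ) + (1/(2H+1))(T−τ)^{2H}
  − (4H/(H+1/2))(1/(T−τ)) ∫₀^{T−τ} t^{H+1/2}(t+τ)^{H−1/2} ₂F₁(1/2−H,1;3/2+H;t/(t+τ)) dt`. -/
theorem rlfbm_tamsd_decomposition
    {Ω : Type*} [MeasurableSpace Ω] (μ : Measure Ω) [IsProbabilityMeasure μ]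
    (H T τ : ℝ) (hH : H ∈ Set.Ioo (0 : ℝ) 1) (hτ : 0 < τ) (hτT : τ < T)
    (B : ℝ → Ω → ℝ)
    (hvar : ∀ t : ℝ, 0 ≤ t → ∫ ω, (B t ω) ^ 2 ∂μ = t ^ (2 * H))
    (hcov : ∀ t : ℝ, 0 ≤ t →
      ∫ ω, B t ω * B (t + τ) ω ∂μ
        = (2 * H / (H + 1/2)) * (t + τ) ^ (H - 1/2) * t ^ (H + 1/2)
            * twoF1 (1/2 - H) 1 (3/2 + H) (t / (t + τ)))
    (hjoint : Integrable (fun q : ℝ × Ω => (B (q.1 + τ) q.2 - B q.1 q.2) ^ 2)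
      ((volume.restrict (Set.Ioc 0 (T - τ))).prod μ)) :
    ∫ ω, ((1 / (T - τ)) * ∫ t in (0 : ℝ)..(T - τ), (B (t + τ) ω - B t ω) ^ 2) ∂μ
      = (1 / (2 * H + 1)) * ((T ^ (2 * H + 1) - τ ^ (2 * H + 1)) / (T - τ))
        + (1 / (2 * H + 1)) * (T - τ) ^ (2 * H)
        - (4 * H / (H + 1/2)) * (1 / (T - τ))
            * ∫ t in (0 : ℝ)..(T - τ), t ^ (H + 1/2) * (t + τ) ^ (H - 1/2)
                * twoF1 (1/2 - H) 1 (3/2 + H) (t / (t + τ)) := by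
  obtain ⟨hH0, -⟩ := hH
  have hT : 0 < T - τ := sub_pos.mpr hτT
  have hr : -1 < 2 * H := by linarith
  have hmsd : (fun t => ∫ ω, (B (t + τ) ω - B t ω) ^ 2 ∂μ) =ᵐ[volume.restrict (Ioc 0 (T - τ))]
      fun t => ((t + τ) ^ (2 * H) + t ^ (2 * H)) - (4 * H / (H + 1/2)) * (t ^ (H + 1/2)
        * (t + τ) ^ (H - 1/2) * twoF1 (1/2 - H) 1 (3/2 + H) (t / (t + τ))) := by
    filter_upwards [ae_restrict_mem measurableSet_Ioc, hjoint.prod_right_ae] with t ht hint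
    exact integral_sq_increment_of_rlfbm_moments hτ ht.1 hvar hcov hint
  have hpowτ := intervalIntegrable_rpow_add_const hr τ 0 (T - τ)
  have hpow₀ := intervalIntegral.intervalIntegrable_rpow' hr (a := 0) (b := T - τ)
  rw [integral_const_mul, integral_intervalIntegral_swap hT.le hjoint,
    intervalIntegral.integral_eq_sub_const_mul_of_ae_eq hT.le (by positivity)
      ((intervalIntegrable_iff_integrableOn_Ioc_of_le hT.le).2 hjoint.integral_prod_left)
      (hpowτ.add hpow₀) hmsd,
    intervalIntegral.integral_add hpowτ hpow₀, integral_rpow_add_const hr, integral_rpow (.inl hr),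
    zero_add, sub_add_cancel, zero_rpow (by linarith), sub_zero, rpow_add hT, rpow_one]
  field_simp
end
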